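/- Let σ ∈ ℝ² be a unit vector and σ⊥ its rotation by π/2. Suppose v ∈ ℝ² satisfies |v + σ| = √5 and |v + σ⊥| = √5. Then either |v| = √2 and |v + σ + σ⊥| = 2√2, or |v| = 2√2 and |v + σ + σ⊥| = √2. -/
import Mathlib


open Real MeasureTheory

noncomputable def pt (x y : ℝ) : EuclideanSpace ℝ (Fin 2) :=
  (WithLp.equiv 2 (Fin 2 → ℝ)).symm ![x, y]

/-- Rotation of a vector by π/2. -/
noncomputable def perp (σ : EuclideanSpace ℝ (Fin 2)) : EuclideanSpace ℝ (Fin 2) :=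
  pt (-σ 1) (σ 0)

lemma norm_eq2 (w : EuclideanSpace ℝ (Fin 2)) :
    ‖w‖ = Real.sqrt ((w 0)^2 + (w 1)^2) := by
  rw [EuclideanSpace.norm_eq, Fin.sum_univ_two, Real.norm_eq_abs, Real.norm_eq_abs,
    sq_abs, sq_abs]

lemma sqrt_eq_of (A B : ℝ) (hA : 0 ≤ A) (hB : 0 ≤ B) (h : Real.sqrt A = Real.sqrt B) :
    A = B := by
  have := congrArg (· ^ 2) h
  simpa [Real.sq_sqrt hA, Real.sq_sqrt hB] using this

lemma alg (a b x y : ℝ) (hσ : a^2 + b^2 = 1)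
    (e1 : (x + a)^2 + (y + b)^2 = 5) (e2 : (x + -b)^2 + (y + a)^2 = 5) :
    (x^2 + y^2 = 2 ∧ (x + a + -b)^2 + (y + b + a)^2 = 8) ∨
    (x^2 + y^2 = 8 ∧ (x + a + -b)^2 + (y + b + a)^2 = 2) := by
  set p := a*x + b*y with hp
  have hq : a*y - b*x = p := by nlinarith [e1, e2]
  have hv2 : x^2 + y^2 = 4 - 2*p := by nlinarith [e1]
  have hpp : (p - 1) * (p + 2) = 0 := by nlinarith [hσ, hv2, hq]
  have hw : (x + a + -b)^2 + (y + b + a)^2 = 6 + 2*p := by nlinarith [hσ, hv2, hq]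
  rcases mul_eq_zero.mp hpp with h | h
  · exact Or.inl ⟨by linarith, by linarith⟩
  · exact Or.inr ⟨by linarith, by linarith⟩

theorem gain_term_locations (σ v : EuclideanSpace ℝ (Fin 2)) (hσ : ‖σ‖ = 1)
    (h1 : ‖v + σ‖ = Real.sqrt 5) (h2 : ‖v + perp σ‖ = Real.sqrt 5) :
    (‖v‖ = Real.sqrt 2 ∧ ‖v + σ + perp σ‖ = 2 * Real.sqrt 2) ∨
    (‖v‖ = 2 * Real.sqrt 2 ∧ ‖v + σ + perp σ‖ = Real.sqrt 2) := by
  have hperp0 : perp σ 0 = -(σ 1) := rfl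
  have hperp1 : perp σ 1 = σ 0 := rfl
  have hadd : ∀ (u w : EuclideanSpace ℝ (Fin 2)) (i : Fin 2), (u + w) i = u i + w i :=
    fun u w i => rfl
  have hσ' : (σ 0)^2 + (σ 1)^2 = 1 := by
    apply sqrt_eq_of _ 1 (by positivity) (by norm_num)
    rw [← norm_eq2, hσ, Real.sqrt_one]
  have e1 : (v 0 + σ 0)^2 + (v 1 + σ 1)^2 = 5 := by
    apply sqrt_eq_of _ 5 (by positivity) (by norm_num)
    rw [show v 0 + σ 0 = (v + σ) 0 from rfl, show v 1 + σ 1 = (v + σ) 1 from rfl,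
      ← norm_eq2, h1]
  have e2 : (v 0 + -(σ 1))^2 + (v 1 + σ 0)^2 = 5 := by
    apply sqrt_eq_of _ 5 (by positivity) (by norm_num)
    rw [show v 0 + -(σ 1) = (v + perp σ) 0 from rfl, show v 1 + σ 0 = (v + perp σ) 1 from rfl,
      ← norm_eq2, h2]
  have hsum0 : (v + σ + perp σ) 0 = v 0 + σ 0 + -(σ 1) := rfl
  have hsum1 : (v + σ + perp σ) 1 = v 1 + σ 1 + σ 0 := rfl
  have h8 : Real.sqrt 8 = 2 * Real.sqrt 2 := by
    rw [show (8:ℝ) = 2^2 * 2 by norm_num, Real.sqrt_mul (by positivity),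
      Real.sqrt_sq (by norm_num)]
  rcases alg (σ 0) (σ 1) (v 0) (v 1) hσ' e1 e2 with ⟨hA, hB⟩ | ⟨hA, hB⟩
  · left
    constructor
    · rw [norm_eq2, hA]
    · rw [norm_eq2, hsum0, hsum1, hB, h8]
  · right
    constructor
    · rw [norm_eq2, hA, h8]
    · rw [norm_eq2, hsum0, hsum1, hB]
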